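/- Let Ω be a finite set of n players and G ≤ S_Ω a group of permutations. Then the dimension of the affine space 𝒜_G of all G-symmetric quasi-values satisfies dim 𝒜_G = (1/|G|) · ( ∑_{π∈G} fix(π) · 2^{c(π)−1} − ∑_{π∈G} 2^{c(π)} ) + 1, where fix(π) is the number of fixed points of π and c(π) is the number of cycles of π (counting fixed points as cycles of length 1). Equivalently, dim 𝒜_G = (∂Z_G/∂x₁ − Z_G)|_{(2,2,…,2)} + 1, where Z_G(x₁,…,x_n) = (1/|G|) ∑_{π∈G} x₁^{j₁(π)} ⋯ x_n^{j_n(π)} is the cycle index of G and j_k(π) is the number of cycles of length k in π. -/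

import Mathlib

open scoped BigOperators

/-- The space of cooperative games on player set `Ω`: real-valued functions on
coalitions vanishing on the empty coalition. -/
def GameSpace (Ω : Type*) [DecidableEq Ω] : Submodule ℝ (Finset Ω → ℝ) where
  carrier := {v | v ∅ = 0}
  add_mem' := by
    intro a b ha hb
    simp only [Set.mem_setOf_eq, Pi.add_apply] at *
    simp [ha, hb]
  zero_mem' := rfl
  smul_mem' := by
    intro c v hv
    simp only [Set.mem_setOf_eq, Pi.smul_apply] at *
    simp [hv]

/-- A (linear) game value: a linear operator from games to payoff vectors. -/
abbrev GameValue (Ω : Type*) [DecidableEq Ω] := GameSpace Ω →ₗ[ℝ] (Ω → ℝ)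

/-- Player `i` is a null player of the game `v`: `v(R ∪ {i}) = v(R)` for all `R`. -/
def IsNullPlayer {Ω : Type*} [DecidableEq Ω] (i : Ω) (v : GameSpace Ω) : Prop :=
  ∀ R : Finset Ω, (v : Finset Ω → ℝ) (insert i R) = (v : Finset Ω → ℝ) R

/-- A quasi-value: a linear game value satisfying the null-player property and
efficiency. -/
def IsQuasiValue {Ω : Type*} [Fintype Ω] [DecidableEq Ω] (φ : GameValue Ω) : Prop :=
  (∀ (v : GameSpace Ω) (i : Ω), IsNullPlayer i v → φ v i = 0) ∧
  (∀ v : GameSpace Ω, ∑ i, φ v i = (v : Finset Ω → ℝ) Finset.univ)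

/-- The action of a permutation on a game: `(g • v)(R) = v(g⁻¹(R))`. -/
def permGame {Ω : Type*} [DecidableEq Ω] (g : Equiv.Perm Ω) (v : GameSpace Ω) :
    GameSpace Ω :=
  ⟨fun R => (v : Finset Ω → ℝ) (R.image (g⁻¹ : Equiv.Perm Ω)), by
    show (v : Finset Ω → ℝ) ((∅ : Finset Ω).image (g⁻¹ : Equiv.Perm Ω)) = 0
    rw [Finset.image_empty]
    exact v.2⟩

/-- `φ` is symmetric with respect to all permutations in `G`:
`φ(g • v) = g • φ(v)`, i.e. `φ(g • v)ᵢ = φ(v)_{g⁻¹ i}` for all `g ∈ G`. -/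
def IsGSym {Ω : Type*} [DecidableEq Ω] (G : Subgroup (Equiv.Perm Ω))
    (φ : GameValue Ω) : Prop :=
  ∀ g ∈ G, ∀ (v : GameSpace Ω) (i : Ω), φ (permGame g v) i = φ v (g⁻¹ i)

/-- The unanimity game `u_R` for a nonempty coalition `R`. -/
def unanimity {Ω : Type*} [DecidableEq Ω] (R : Finset Ω) (hR : R.Nonempty) :
    GameSpace Ω :=
  ⟨fun S => if R ⊆ S then (1 : ℝ) else 0, by
    show (if R ⊆ (∅ : Finset Ω) then (1 : ℝ) else 0) = 0
    simp [Finset.subset_empty, hR.ne_empty]⟩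

/-- The number of fixed points of a permutation. -/
def numFixed {Ω : Type*} [Fintype Ω] [DecidableEq Ω] (π : Equiv.Perm Ω) : ℕ :=
  (Finset.univ.filter fun i => π i = i).card

/-- The number of cycles of a permutation, counting fixed points as cycles of
length `1`. -/
def numCycles {Ω : Type*} [Fintype Ω] [DecidableEq Ω] (π : Equiv.Perm Ω) : ℕ :=
  π.cycleType.card + numFixed π

/-!
In the coordinates `a (R, i) = φ (u_R) i` with respect to the basis of unanimity games `u_R`
(`R ≠ ∅`), a game value is a `G`-symmetric quasi-value iff `a (R, i) = 0` for `i ∉ R`,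
`∑ i, a (R, i) = 1`, and `a` is invariant under the action of `G` on pairs `(R, i)`.
Hence `𝒜_G` is the Shapley value plus the space of `G`-invariant vectors in the range of the
projection `P` that restricts each row to `R` and subtracts its mean. Since `P` commutes with the
permutation action, `P` composed with the group average is a projection onto that space, so its
dimension is the average over `π ∈ G` of `tr (P ∘ π)`. This trace is the number of pairs
`(R, i)` with `i ∈ R` fixed by `π`, minus the number of nonempty coalitions fixed by `π`.
A `π`-invariant coalition is a union of cycles of `π`, which gives `fix(π) · 2^(c(π) - 1)` and
`2^c(π) - 1`.
-/

open Finset Module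
open scoped Pointwise

namespace Representation

section Average

variable {k G V : Type*} [Field k] [Group G] [Fintype G] [AddCommGroup V] [Module k V]
  [FiniteDimensional k V]

theorem finrank_range_inf_invariants [Invertible (Nat.card G : k)] (ρ : Representation k G V)
    {P : Module.End k V} (hP : IsIdempotentElem P) (hPρ : ∀ g, Commute P (ρ g)) :
    (finrank k ↥(LinearMap.range P ⊓ ρ.invariants) : k) =
      (Nat.card G : k)⁻¹ * ∑ g, LinearMap.trace k V (P * ρ g) := by
  have : Invertible (Fintype.card G : k) := by rw [Fintype.card_eq_nat_card]; assumption
  have hproj : LinearMap.IsProj (LinearMap.range P ⊓ ρ.invariants) (P * ρ.averageMap) := by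
    refine ⟨fun v => ⟨LinearMap.mem_range_self P _, fun g => ?_⟩,
      fun v ⟨⟨w, hw⟩, hv⟩ => ?_⟩
    · change (ρ g * P) (ρ.averageMap v) = P (ρ.averageMap v)
      rw [← (hPρ g).eq, Module.End.mul_apply, ρ.averageMap_invariant v g]
    · rw [Module.End.mul_apply, ρ.averageMap_id v hv, ← hw, ← Module.End.mul_apply, hP.eq]
  rw [← hproj.trace]
  simp [GroupAlgebra.average, map_sum, mul_sum]

end Average

section OfMulActionFun

variable (k G ι : Type*) [CommSemiring k] [Group G] [MulAction G ι]

def ofMulActionFun : Representation k G (ι → k) where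
  toFun g := LinearMap.funLeft k k (g⁻¹ • ·)
  map_one' := by ext; simp
  map_mul' g h := by ext; simp [mul_smul]

variable {k G ι}

@[simp] theorem ofMulActionFun_apply (g : G) (a : ι → k) (x : ι) :
    ofMulActionFun k G ι g a x = a (g⁻¹ • x) := rfl

theorem ofMulActionFun_single [DecidableEq ι] (g : G) (x : ι) :
    ofMulActionFun k G ι g (Pi.single x 1) = Pi.single (g • x) 1 := by
  ext y
  simp [Pi.single_apply, inv_smul_eq_iff]

theorem mem_invariants_ofMulActionFun_comp_subtype {k : Type*} [CommRing k] {H : Subgroup G}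
    {a : ι → k} :
    a ∈ invariants ((ofMulActionFun k G ι).comp H.subtype) ↔
      ∀ g ∈ H, ∀ x, a (g • x) = a x := by
  refine ⟨fun h g hg x => ?_, fun h g => funext fun x => h _ (inv_mem g.2) x⟩
  simpa using congrFun (h ⟨g⁻¹, inv_mem hg⟩) x

end OfMulActionFun

end Representation

theorem LinearMap.trace_eq_sum_apply_single {k ι : Type*} [CommRing k] [Fintype ι]
    [DecidableEq ι] (f : Module.End k (ι → k)) :
    LinearMap.trace k (ι → k) f = ∑ i, f (Pi.single i 1) i := by
  rw [LinearMap.trace_eq_matrix_trace k (Pi.basisFun k ι), Matrix.trace]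
  simp

theorem finrank_direction_affineSpan_preimage {k V W : Type*} [Field k] [AddCommGroup V]
    [Module k V] [AddCommGroup W] [Module k W] (e : V ≃ₗ[k] W) (s : Set W) :
    finrank k (affineSpan k (e ⁻¹' s)).direction = finrank k (affineSpan k s).direction := by
  have h : vectorSpan k (e.symm '' s) = (vectorSpan k s).map (e.symm : W →ₗ[k] V) :=
    (AffineMap.map_vectorSpan (e.symm : W →ₗ[k] V).toAffineMap).symm
  rw [direction_affineSpan, direction_affineSpan, ← e.image_symm_eq_preimage, h,
    LinearEquiv.finrank_map_eq]

theorem card_filter_nonempty {α : Type*} [Fintype α] :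
    #{s : Finset α | s.Nonempty} = 2 ^ Fintype.card α - 1 := by
  classical
  rw [← Fintype.card_subtype]
  simp only [nonempty_iff_ne_empty]
  rw [Fintype.card_subtype_compl]
  simp

section FinsetCount

variable {α : Type*} [Fintype α] [DecidableEq α]

theorem card_filter_mem_finset (a : α) :
    #{s : Finset α | a ∈ s} = 2 ^ (Fintype.card α - 1) := by
  have : ({s : Finset α | a ∈ s} : Finset _) = (univ.erase a).powerset.image (insert a) := by
    ext s
    simp only [mem_filter, mem_univ, true_and, mem_image, mem_powerset]
    refine ⟨fun h => ⟨s.erase a, erase_subset_erase a (subset_univ s), insert_erase h⟩, ?_⟩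
    rintro ⟨t, -, rfl⟩
    exact mem_insert_self a t
  rw [this, card_image_of_injOn, card_powerset, card_erase_of_mem (mem_univ a), card_univ]
  intro s hs t ht h
  have has : a ∉ s := fun h' => by simpa using mem_powerset.1 hs h'
  have hat : a ∉ t := fun h' => by simpa using mem_powerset.1 ht h'
  rw [← erase_insert has, ← erase_insert hat]
  exact congrArg (·.erase a) h

theorem card_filter_saturated (r : Setoid α) [DecidableRel r] (P : Finset (Quotient r) → Prop)
    [DecidablePred P] :
    #{s : Finset α | (∀ x y, r x y → x ∈ s → y ∈ s) ∧ P (s.image (Quotient.mk r))} =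
      #{T : Finset (Quotient r) | P T} := by
  have image_filter (T : Finset (Quotient r)) :
      ({x | Quotient.mk r x ∈ T} : Finset α).image (Quotient.mk r) = T := by
    ext q
    induction q using Quotient.inductionOn
    simp only [mem_image, mem_filter, mem_univ, true_and]
    exact ⟨fun ⟨y, hy, hyx⟩ => hyx ▸ hy, fun h => ⟨_, h, rfl⟩⟩
  refine card_nbij' (·.image (Quotient.mk r)) (fun T => ({x | Quotient.mk r x ∈ T} : Finset α))
    ?_ ?_ ?_ ?_
  · intro s hs
    simp_all
  · intro T hT
    simp only [coe_filter, mem_univ, true_and, Set.mem_ofPred_eq] at hT ⊢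
    refine ⟨fun x y hxy hx => ?_, by rwa [image_filter]⟩
    simpa [← Quotient.sound hxy] using hx
  · intro s hs
    simp only [coe_filter, mem_univ, true_and, Set.mem_ofPred_eq] at hs
    ext x
    simp only [mem_filter, mem_univ, true_and, mem_image]
    exact ⟨fun ⟨y, hy, hyx⟩ => hs.1 y x (Quotient.exact hyx) hy, fun hx => ⟨x, hx, rfl⟩⟩
  · exact fun T _ => image_filter T

end FinsetCount

namespace Equiv.Perm

variable {α : Type*} [DecidableEq α]

theorem smul_finset_eq_self_iff_sameCycle {g : Perm α} {s : Finset α} :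
    g • s = s ↔ ∀ x y, g.SameCycle x y → x ∈ s → y ∈ s := by
  refine ⟨fun h x y ⟨n, hn⟩ hx => ?_, fun h => ?_⟩
  · have hn' : (g ^ n) • s = s := zpow_mem (MulAction.mem_stabilizer_iff.2 h) n
    rw [← hn', ← hn]
    exact smul_mem_smul_finset hx
  · refine eq_of_subset_of_card_le (fun y hy => ?_) (card_smul_finset g s).ge
    obtain ⟨x, hx, rfl⟩ := mem_smul_finset.1 hy
    exact h x _ (SameCycle.refl g x).apply_right hx

variable [Fintype α]

instance (g : Perm α) : DecidableRel (SameCycle.setoid g) :=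
  fun x y => inferInstanceAs (Decidable (g.SameCycle x y))

noncomputable def quotientSameCycleEquiv (g : Perm α) :
    Quotient (SameCycle.setoid g) ≃ {x // g x = x} ⊕ g.cycleFactorsFinset := by
  let F (x : α) : {x // g x = x} ⊕ g.cycleFactorsFinset :=
    if h : g x = x then .inl ⟨x, h⟩
    else .inr ⟨g.cycleOf x, cycleOf_mem_cycleFactorsFinset_iff.2 (mem_support.2 h)⟩
  have hF : ∀ x y, g.SameCycle x y → F x = F y := fun x y hxy => by
    by_cases hx : g x = x
    · obtain rfl := hxy.eq_of_left hx
      rfl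
    · simp only [F, dif_neg hx, dif_neg (hxy.apply_eq_self_iff.not.1 hx), hxy.cycleOf_eq]
  refine .ofBijective (Quotient.lift F hF) ⟨fun p q => ?_, ?_⟩
  · induction p, q using Quotient.inductionOn₂ with | h x y => ?_
    refine fun h => Quotient.sound ?_
    simp only [Quotient.lift_mk, F] at h
    split_ifs at h with hx hy hy
    · simp only [Sum.inl.injEq, Subtype.mk.injEq] at h
      exact h ▸ SameCycle.refl g x
    · simp only [Sum.inr.injEq, Subtype.mk.injEq] at h
      exact (sameCycle_iff_cycleOf_eq_of_mem_support (mem_support.2 hx) (mem_support.2 hy)).2 h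
  · rintro (⟨x, hx⟩ | ⟨c, hc⟩)
    · exact ⟨Quotient.mk _ x, by simp [F, hx]⟩
    · obtain ⟨x, hx⟩ := (mem_cycleFactorsFinset_iff.1 hc).1.nonempty_support
      have hgx : g x ≠ x := mem_support.1 (mem_cycleFactorsFinset_support_le hc hx)
      exact ⟨Quotient.mk _ x, by simp [F, hgx, cycle_is_cycleOf hx hc]⟩

theorem card_quotient_sameCycle (g : Perm α) :
    Nat.card (Quotient (SameCycle.setoid g)) = numCycles g := by
  rw [Nat.card_congr (quotientSameCycleEquiv g), Nat.card_sum, Nat.card_eq_fintype_card,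
    Fintype.card_subtype, Nat.card_eq_fintype_card, Fintype.card_coe, numCycles, numFixed,
    cycleType_def, Multiset.card_map, add_comm]
  rfl

theorem card_filter_smul_finset_eq_self (g : Perm α)
    (P : Finset (Quotient (SameCycle.setoid g)) → Prop) [DecidablePred P] :
    #{s : Finset α | g • s = s ∧ P (s.image (Quotient.mk _))} = #{T | P T} := by
  simp only [smul_finset_eq_self_iff_sameCycle]
  exact card_filter_saturated _ P

end Equiv.Perm

abbrev NonemptyCoalition (Ω : Type*) := {R : Finset Ω // R.Nonempty}

theorem card_nonemptyCoalition {Ω : Type*} [Fintype Ω] :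
    Fintype.card (NonemptyCoalition Ω) = 2 ^ Fintype.card Ω - 1 := by
  rw [Fintype.card_subtype, card_filter_nonempty]

theorem card_filter_nonemptyCoalition {Ω : Type*} [Fintype Ω] (P : Finset Ω → Prop)
    [DecidablePred P] :
    #{R : NonemptyCoalition Ω | P R.1} = #{s : Finset Ω | s.Nonempty ∧ P s} := by
  simp only [← Fintype.card_subtype]
  exact Fintype.card_congr (Equiv.subtypeSubtypeEquivSubtypeInter _ _)

section Games

variable {Ω : Type*} [DecidableEq Ω]

instance : MulAction (Equiv.Perm Ω) (NonemptyCoalition Ω) where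
  smul g R := ⟨g • R.1, R.2.smul_finset⟩
  one_smul R := Subtype.ext (one_smul _ R.1)
  mul_smul g h R := Subtype.ext (mul_smul g h R.1)

@[simp] theorem NonemptyCoalition.coe_smul (g : Equiv.Perm Ω) (R : NonemptyCoalition Ω) :
    (g • R).1 = g • R.1 := rfl

theorem unanimity_apply (R : Finset Ω) (hR : R.Nonempty) (S : Finset Ω) :
    (unanimity R hR : Finset Ω → ℝ) S = if R ⊆ S then 1 else 0 := rfl

theorem gameSpace_eq_ker :
    GameSpace Ω = LinearMap.ker (LinearMap.proj (R := ℝ) (φ := fun _ : Finset Ω => ℝ) ∅) :=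
  rfl

theorem isNullPlayer_unanimity {i : Ω} {R : Finset Ω} (hR : R.Nonempty) (hi : i ∉ R) :
    IsNullPlayer i (unanimity R hR) := fun S => by
  simp only [unanimity_apply, subset_insert_iff_of_notMem hi]

def nullifyPlayer (i : Ω) : GameSpace Ω →ₗ[ℝ] GameSpace Ω where
  toFun v := ⟨fun S => (v : Finset Ω → ℝ) (S.erase i), by
    change (v : Finset Ω → ℝ) ((∅ : Finset Ω).erase i) = 0
    rw [erase_empty]
    exact v.2⟩
  map_add' _ _ := rfl
  map_smul' _ _ := rfl

theorem nullifyPlayer_eq_self {i : Ω} {v : GameSpace Ω} (hv : IsNullPlayer i v) :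
    nullifyPlayer i v = v := by
  refine Subtype.ext (funext fun S => ?_)
  change (v : Finset Ω → ℝ) (S.erase i) = (v : Finset Ω → ℝ) S
  by_cases hi : i ∈ S
  · rw [← hv (S.erase i), insert_erase hi]
  · rw [erase_eq_of_notMem hi]

theorem nullifyPlayer_unanimity {i : Ω} {R : Finset Ω} (hR : R.Nonempty) :
    nullifyPlayer i (unanimity R hR) = if i ∈ R then 0 else unanimity R hR := by
  refine Subtype.ext (funext fun S => ?_)
  change (if R ⊆ S.erase i then (1 : ℝ) else 0) =
    ((if i ∈ R then 0 else unanimity R hR : GameSpace Ω) : Finset Ω → ℝ) S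
  by_cases hi : i ∈ R <;> simp [subset_erase, hi, unanimity_apply]

@[simps]
def permGameLinear (g : Equiv.Perm Ω) : GameSpace Ω →ₗ[ℝ] GameSpace Ω where
  toFun := permGame g
  map_add' _ _ := rfl
  map_smul' _ _ := rfl

theorem permGame_unanimity (g : Equiv.Perm Ω) {R : Finset Ω} (hR : R.Nonempty) :
    permGame g (unanimity R hR) = unanimity (g • R) hR.smul_finset := by
  refine Subtype.ext (funext fun S => ?_)
  change (if R ⊆ g⁻¹ • S then (1 : ℝ) else 0) = if g • R ⊆ S then 1 else 0
  simp only [subset_smul_finset_iff, inv_inv]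

variable [Fintype Ω]

theorem linearIndependent_unanimity :
    LinearIndependent ℝ (fun R : NonemptyCoalition Ω => unanimity R.1 R.2) := by
  rw [Fintype.linearIndependent_iff]
  intro c hc R
  induction R using WellFoundedLT.induction with
  | ind R ih =>
    have hR := congr_arg (fun v : GameSpace Ω => (v : Finset Ω → ℝ) R.1) hc
    simp only [Submodule.coe_sum, Submodule.coe_smul, Finset.sum_apply, Pi.smul_apply,
      unanimity_apply, smul_eq_mul, mul_ite, mul_one, mul_zero, ZeroMemClass.coe_zero,
      Pi.zero_apply] at hR
    rw [sum_eq_single R (fun S _ hSR => ?_) (by simp), if_pos subset_rfl] at hR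
    · exact hR
    · split_ifs with hS
      · rw [ih S (lt_of_le_of_ne hS hSR)]
      · rfl

theorem finrank_gameSpace : finrank ℝ (GameSpace Ω) = 2 ^ Fintype.card Ω - 1 := by
  have h := LinearMap.finrank_range_add_finrank_ker
    (LinearMap.proj (R := ℝ) (φ := fun _ : Finset Ω => ℝ) ∅)
  rw [LinearMap.range_eq_top.2 (LinearMap.proj_surjective _), finrank_top, finrank_self,
    ← gameSpace_eq_ker, Module.finrank_fintype_fun_eq_card, Fintype.card_finset] at h
  omega

noncomputable def unanimityBasis : Basis (NonemptyCoalition Ω) ℝ (GameSpace Ω) :=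
  basisOfLinearIndependentOfCardEqFinrank' _ linearIndependent_unanimity
    (card_nonemptyCoalition.trans finrank_gameSpace.symm)

@[simp] theorem unanimityBasis_apply (R : NonemptyCoalition Ω) :
    unanimityBasis R = unanimity R.1 R.2 := by
  simp [unanimityBasis]

noncomputable def gameValueEquiv : GameValue Ω ≃ₗ[ℝ] (NonemptyCoalition Ω × Ω → ℝ) :=
  (unanimityBasis.constr ℝ).symm ≪≫ₗ (LinearEquiv.curry ℝ ℝ _ _).symm

theorem gameValueEquiv_apply (φ : GameValue Ω) (p : NonemptyCoalition Ω × Ω) :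
    gameValueEquiv φ p = φ (unanimity p.1.1 p.1.2) p.2 := by
  simp [gameValueEquiv, Function.uncurry_def]

theorem forall_isNullPlayer_iff (φ : GameValue Ω) :
    (∀ (v : GameSpace Ω) (i : Ω), IsNullPlayer i v → φ v i = 0) ↔
      ∀ p : NonemptyCoalition Ω × Ω, p.2 ∉ p.1.1 → gameValueEquiv φ p = 0 := by
  simp only [gameValueEquiv_apply]
  refine ⟨fun h p hp => h _ _ (isNullPlayer_unanimity p.1.2 hp), fun h v i hv => ?_⟩
  have : LinearMap.proj i ∘ₗ φ ∘ₗ nullifyPlayer i = 0 := unanimityBasis.ext fun R => by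
    by_cases hi : i ∈ R.1 <;> simp [nullifyPlayer_unanimity, hi, h (R, i)]
  rw [← nullifyPlayer_eq_self hv]
  exact LinearMap.congr_fun this v

theorem forall_sum_eq_apply_univ_iff (φ : GameValue Ω) :
    (∀ v : GameSpace Ω, ∑ i, φ v i = (v : Finset Ω → ℝ) univ) ↔
      ∀ R : NonemptyCoalition Ω, ∑ i, gameValueEquiv φ (R, i) = 1 := by
  simp only [gameValueEquiv_apply]
  refine ⟨fun h R => by simpa [unanimity_apply] using h (unanimity R.1 R.2), fun h => ?_⟩
  have : (∑ i, LinearMap.proj i) ∘ₗ φ = LinearMap.proj univ ∘ₗ (GameSpace Ω).subtype :=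
    unanimityBasis.ext fun R => by simp [h R, unanimity_apply]
  exact fun v => by simpa using LinearMap.congr_fun this v

theorem isGSym_iff (G : Subgroup (Equiv.Perm Ω)) (φ : GameValue Ω) :
    IsGSym G φ ↔
      ∀ g ∈ G, ∀ p : NonemptyCoalition Ω × Ω,
        gameValueEquiv φ (g • p) = gameValueEquiv φ p := by
  simp only [gameValueEquiv_apply, Prod.smul_fst, Prod.smul_snd, Equiv.Perm.smul_def]
  refine ⟨fun h g hg p => ?_, fun h g hg => ?_⟩
  · simpa [permGame_unanimity] using h g hg (unanimity p.1.1 p.1.2) (g p.2)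
  · have : φ ∘ₗ permGameLinear g = LinearMap.funLeft ℝ ℝ ⇑g⁻¹ ∘ₗ φ :=
      unanimityBasis.ext fun R => funext fun i => by
        simpa [permGame_unanimity] using h g hg (R, g⁻¹ i)
    exact fun v i => congr_fun (LinearMap.congr_fun this v) i

end Games

section Coordinates

abbrev coalitionPlayerRep (Ω : Type*) [DecidableEq Ω] :
    Representation ℝ (Equiv.Perm Ω) (NonemptyCoalition Ω × Ω → ℝ) :=
  Representation.ofMulActionFun ℝ _ _

variable {Ω : Type*} [DecidableEq Ω]

noncomputable def sumZeroProj : Module.End ℝ (NonemptyCoalition Ω × Ω → ℝ) where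
  toFun a p := if p.2 ∈ p.1.1 then a p - (∑ j ∈ p.1.1, a (p.1, j)) / #p.1.1 else 0
  map_add' a b := funext fun p => by
    dsimp only [Pi.add_apply]
    split_ifs
    · rw [sum_add_distrib]; ring
    · simp
  map_smul' c a := funext fun p => by
    dsimp only [Pi.smul_apply, smul_eq_mul, RingHom.id_apply]
    split_ifs
    · rw [← mul_sum]; ring
    · simp

theorem sumZeroProj_apply (a : NonemptyCoalition Ω × Ω → ℝ)
    (p : NonemptyCoalition Ω × Ω) :
    sumZeroProj a p = if p.2 ∈ p.1.1 then a p - (∑ j ∈ p.1.1, a (p.1, j)) / #p.1.1 else 0 :=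
  rfl

theorem commute_sumZeroProj (g : Equiv.Perm Ω) :
    Commute sumZeroProj (coalitionPlayerRep Ω g) := by
  refine LinearMap.ext fun a => funext fun ⟨R, i⟩ => ?_
  simp only [Module.End.mul_apply, Representation.ofMulActionFun_apply, sumZeroProj_apply,
    Prod.smul_mk, NonemptyCoalition.coe_smul, smul_mem_smul_finset_iff, card_smul_finset]
  rw [smul_finset_def, sum_image fun x _ y _ h => MulAction.injective g⁻¹ h]

theorem sumZeroProj_single_smul_apply (g : Equiv.Perm Ω) (p : NonemptyCoalition Ω × Ω) :
    sumZeroProj (Pi.single (g • p) 1) p =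
      (if p.2 ∈ p.1.1 ∧ g • p = p then 1 else 0) -
        if g • p.1 = p.1 ∧ p.2 ∈ p.1.1 then (#p.1.1 : ℝ)⁻¹ else 0 := by
  obtain ⟨R, i⟩ := p
  rw [sumZeroProj_apply]
  dsimp only
  by_cases hi : i ∈ R.1
  · by_cases hR : g • R = R
    · have hgi : g i ∈ R.1 := by rw [← hR]; exact smul_mem_smul_finset_iff g |>.2 hi
      simp [Pi.single_apply, hR, hi, hgi, Prod.ext_iff, eq_comm (a := i)]
    · simp [hR, hi, Prod.ext_iff]
  · simp [hi]

/-- The Shapley value, in coordinates: a base point of the affine space. -/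
noncomputable def shapleyCoords : NonemptyCoalition Ω × Ω → ℝ :=
  fun p => if p.2 ∈ p.1.1 then (#p.1.1 : ℝ)⁻¹ else 0

theorem shapleyCoords_smul (g : Equiv.Perm Ω) (p : NonemptyCoalition Ω × Ω) :
    shapleyCoords (g • p) = shapleyCoords p := by
  simp only [shapleyCoords, Prod.smul_fst, Prod.smul_snd, NonemptyCoalition.coe_smul,
    smul_mem_smul_finset_iff, card_smul_finset]

variable [Fintype Ω]

theorem sum_shapleyCoords (R : NonemptyCoalition Ω) : ∑ i, shapleyCoords (R, i) = 1 := by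
  have : (#R.1 : ℝ) ≠ 0 := by simpa using R.2.ne_empty
  simp only [shapleyCoords, sum_ite_mem, univ_inter, sum_const, nsmul_eq_mul,
    mul_inv_cancel₀ this]

theorem sum_sumZeroProj (a : NonemptyCoalition Ω × Ω → ℝ) (R : NonemptyCoalition Ω) :
    ∑ i, sumZeroProj a (R, i) = 0 := by
  have : (#R.1 : ℝ) ≠ 0 := by simpa using R.2.ne_empty
  simp only [sumZeroProj_apply, sum_ite_mem, univ_inter, sum_sub_distrib, sum_const,
    nsmul_eq_mul]
  field_simp
  ring

theorem sumZeroProj_eq_self_iff {a : NonemptyCoalition Ω × Ω → ℝ} :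
    sumZeroProj a = a ↔ (∀ p : NonemptyCoalition Ω × Ω, p.2 ∉ p.1.1 → a p = 0) ∧
      ∀ R : NonemptyCoalition Ω, ∑ i, a (R, i) = 0 := by
  refine ⟨fun h => ⟨fun p hp => ?_, fun R => ?_⟩,
    fun ⟨hsupp, hsum⟩ => funext fun p => ?_⟩
  · rw [← h, sumZeroProj_apply, if_neg hp]
  · rw [← h, sum_sumZeroProj]
  · rw [sumZeroProj_apply]
    split_ifs with hp
    · rw [sum_subset (subset_univ _) fun j _ hj => hsupp (p.1, j) hj, hsum, zero_div, sub_zero]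
    · exact (hsupp p hp).symm

theorem isIdempotentElem_sumZeroProj : IsIdempotentElem (sumZeroProj (Ω := Ω)) :=
  LinearMap.ext fun a => sumZeroProj_eq_self_iff.2
    ⟨fun p hp => by rw [sumZeroProj_apply, if_neg hp], sum_sumZeroProj a⟩

theorem trace_sumZeroProj_mul (g : Equiv.Perm Ω) :
    LinearMap.trace ℝ _ (sumZeroProj * coalitionPlayerRep Ω g) =
      #{p : NonemptyCoalition Ω × Ω | p.2 ∈ p.1.1 ∧ g • p = p} -
        #{R : NonemptyCoalition Ω | g • R = R} := by
  simp only [LinearMap.trace_eq_sum_apply_single, Module.End.mul_apply,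
    Representation.ofMulActionFun_single, sumZeroProj_single_smul_apply, sum_sub_distrib]
  rw [natCast_card_filter, natCast_card_filter]
  congr 1
  rw [Fintype.sum_prod_type]
  refine sum_congr rfl fun R _ => ?_
  have : (#R.1 : ℝ) ≠ 0 := by simpa using R.2.ne_empty
  split_ifs with hR
  · simp only [hR, true_and]
    rw [sum_ite_mem, univ_inter, sum_const, nsmul_eq_mul, mul_inv_cancel₀ this]
  · simp [hR]

theorem card_filter_smul_eq_self (g : Equiv.Perm Ω) :
    #{R : NonemptyCoalition Ω | g • R = R} = 2 ^ numCycles g - 1 := by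
  calc #{R : NonemptyCoalition Ω | g • R = R}
      = #{s : Finset Ω | g • s = s ∧ (s.image (Quotient.mk _)).Nonempty} := by
        simp only [Subtype.ext_iff, NonemptyCoalition.coe_smul, image_nonempty, and_comm]
        exact card_filter_nonemptyCoalition (fun s => g • s = s)
    _ = #{T : Finset (Quotient (Equiv.Perm.SameCycle.setoid g)) | T.Nonempty} :=
        Equiv.Perm.card_filter_smul_finset_eq_self g _
    _ = 2 ^ numCycles g - 1 := by
        rw [card_filter_nonempty, ← Nat.card_eq_fintype_card, Equiv.Perm.card_quotient_sameCycle]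

theorem card_filter_mem_and_smul_eq_self (g : Equiv.Perm Ω) (i : Ω) :
    #{R : NonemptyCoalition Ω | i ∈ R.1 ∧ g • R = R} = 2 ^ (numCycles g - 1) := by
  calc #{R : NonemptyCoalition Ω | i ∈ R.1 ∧ g • R = R}
      = #{s : Finset Ω | g • s = s ∧
          Quotient.mk (Equiv.Perm.SameCycle.setoid g) i ∈ s.image (Quotient.mk _)} := by
        simp only [Subtype.ext_iff, NonemptyCoalition.coe_smul, card_filter_nonemptyCoalition
          (fun s => i ∈ s ∧ g • s = s)]
        refine congrArg card (filter_congr fun s _ => ?_)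
        refine ⟨fun ⟨_, hi, hs⟩ => ⟨hs, mem_image_of_mem _ hi⟩, fun ⟨hs, hi⟩ => ?_⟩
        obtain ⟨y, hy, hyi⟩ := mem_image.1 hi
        have hi : i ∈ s :=
          Equiv.Perm.smul_finset_eq_self_iff_sameCycle.1 hs y i (Quotient.exact hyi) hy
        exact ⟨⟨i, hi⟩, hi, hs⟩
    _ = #{T : Finset (Quotient (Equiv.Perm.SameCycle.setoid g)) | Quotient.mk _ i ∈ T} :=
        Equiv.Perm.card_filter_smul_finset_eq_self g (Quotient.mk _ i ∈ ·)
    _ = 2 ^ (numCycles g - 1) := by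
        rw [card_filter_mem_finset, ← Nat.card_eq_fintype_card,
          Equiv.Perm.card_quotient_sameCycle]

theorem card_filter_snd_mem_and_smul_eq_self (g : Equiv.Perm Ω) :
    #{p : NonemptyCoalition Ω × Ω | p.2 ∈ p.1.1 ∧ g • p = p} =
      numFixed g * 2 ^ (numCycles g - 1) := by
  have hfiber (i : Ω) :
      (∑ R : NonemptyCoalition Ω, if i ∈ R.1 ∧ g • (R, i) = (R, i) then 1 else 0) =
        if g i = i then 2 ^ (numCycles g - 1) else 0 := by
    simp only [Prod.smul_mk, Prod.mk.injEq, Equiv.Perm.smul_def]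
    split_ifs with hi
    · simp only [hi, and_true]
      rw [← card_filter, card_filter_mem_and_smul_eq_self]
    · simp [hi]
  rw [card_filter, Fintype.sum_prod_type_right]
  simp only [hfiber, sum_ite, sum_const_zero, add_zero, sum_const, smul_eq_mul, numFixed]

variable (G : Subgroup (Equiv.Perm Ω))

def symmetricQuasiValueCoords : Set (NonemptyCoalition Ω × Ω → ℝ) :=
  {a | (∀ p : NonemptyCoalition Ω × Ω, p.2 ∉ p.1.1 → a p = 0) ∧
    (∀ R : NonemptyCoalition Ω, ∑ i, a (R, i) = 1) ∧ ∀ g ∈ G, ∀ p, a (g • p) = a p}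

theorem preimage_symmetricQuasiValueCoords :
    gameValueEquiv ⁻¹' symmetricQuasiValueCoords G =
      {φ : GameValue Ω | IsQuasiValue φ ∧ IsGSym G φ} := by
  ext φ
  simp only [Set.mem_preimage, symmetricQuasiValueCoords, Set.mem_ofPred_eq, IsQuasiValue,
    forall_isNullPlayer_iff, forall_sum_eq_apply_univ_iff, isGSym_iff, and_assoc]

noncomputable def symmetricDirection : Submodule ℝ (NonemptyCoalition Ω × Ω → ℝ) :=
  LinearMap.range sumZeroProj ⊓ Representation.invariants ((coalitionPlayerRep Ω).comp G.subtype)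

theorem symmetricQuasiValueCoords_eq :
    symmetricQuasiValueCoords G = AffineSubspace.mk' shapleyCoords (symmetricDirection G) := by
  ext a
  rw [SetLike.mem_coe, AffineSubspace.mem_mk', vsub_eq_sub, symmetricDirection, Submodule.mem_inf,
    LinearMap.IsIdempotentElem.mem_range_iff isIdempotentElem_sumZeroProj,
    sumZeroProj_eq_self_iff, Representation.mem_invariants_ofMulActionFun_comp_subtype, and_assoc]
  refine and_congr (forall_congr' fun p => imp_congr_right fun hp => ?_)
    (and_congr (forall_congr' fun R => ?_) (forall₂_congr fun g _ => forall_congr' fun p => ?_))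
  · simp [shapleyCoords, hp]
  · rw [Fintype.sum_congr _ _ fun i => Pi.sub_apply a shapleyCoords (R, i), sum_sub_distrib,
      sum_shapleyCoords, sub_eq_zero]
  · rw [Pi.sub_apply, Pi.sub_apply, shapleyCoords_smul, sub_left_inj]

end Coordinates

/-- the explicit dimension formula
`dim 𝒜_G = (1/|G|)·(∑_{π∈G} fix(π)·2^{c(π)-1} - ∑_{π∈G} 2^{c(π)}) + 1`,
which is the evaluation `(∂Z_G/∂x₁ - Z_G)|_{(2,…,2)} + 1` of the cycle index. -/
theorem stmt3 {Ω : Type*} [Fintype Ω] [DecidableEq Ω] (G : Subgroup (Equiv.Perm Ω))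
    [Fintype G] :
    (Module.finrank ℝ
        (affineSpan ℝ {φ : GameValue Ω | IsQuasiValue φ ∧ IsGSym G φ}).direction : ℝ) =
      (1 / (Nat.card G : ℝ)) *
        ((∑ g : G, (numFixed (g : Equiv.Perm Ω) : ℝ) *
            2 ^ (numCycles (g : Equiv.Perm Ω) - 1)) -
          ∑ g : G, (2 : ℝ) ^ numCycles (g : Equiv.Perm Ω)) + 1 := by
  have hG : (Nat.card G : ℝ) ≠ 0 := Nat.cast_ne_zero.2 Nat.card_pos.ne'
  have : Invertible (Nat.card G : ℝ) := invertibleOfNonzero hG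
  rw [← preimage_symmetricQuasiValueCoords, finrank_direction_affineSpan_preimage,
    symmetricQuasiValueCoords_eq, AffineSubspace.affineSpan_coe, AffineSubspace.direction_mk',
    symmetricDirection,
    Representation.finrank_range_inf_invariants ((coalitionPlayerRep Ω).comp G.subtype)
      isIdempotentElem_sumZeroProj fun g => commute_sumZeroProj (g : Equiv.Perm Ω)]
  simp only [MonoidHom.comp_apply, Subgroup.coe_subtype, trace_sumZeroProj_mul,
    card_filter_snd_mem_and_smul_eq_self, card_filter_smul_eq_self]
  push_cast [Nat.one_le_two_pow]
  rw [sum_sub_distrib, sum_sub_distrib, sum_const, card_univ, ← Nat.card_eq_fintype_card,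
    nsmul_eq_mul, mul_one]
  field_simp
  ring
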